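/- arXiv:1502.07326 — 2 statements merged into one kernel-verified Lean document; each statement's English description precedes it below -/
import Mathlib

section
/- If L is rationally closed and satisfies ⨆_{i∈I}(a → b_i) = a → ⨆_{i∈I} b_i for all a and all families {b_i}, then for any finite index set I, any I-indexed family {B_i} of finite rational fuzzy sets in Var, any finite rational fuzzy set A, and any theory Σ: ⨅_{i∈I} |A⇒B_i|_Σ = |A ⇒ ⋃_{i∈I} B_i|_Σ (where the union of fuzzy sets is the pointwise supremum). -/
/- Common framework for Rational Fuzzy Attribute Logic (RFAL):
   truth degrees in the real unit interval, fuzzy sets, subsethood,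
   the deductive system (axioms, Cut, Mul), provability and semantic
   entailment degrees, and the least-model iteration. -/

open scoped Classical
noncomputable section

instance : Fact ((0:ℝ) ≤ 1) := ⟨zero_le_one⟩

/-- The real unit interval, used as the set of truth degrees. -/
abbrev UI := unitInterval

/-- Standard Łukasiewicz conjunction: a ⊗_Ł b = max(0, a+b-1). -/
def lukMul (a b : UI) : UI :=
  ⟨max 0 (a.1 + b.1 - 1), Set.mem_Icc.mpr ⟨le_max_left _ _,
    max_le zero_le_one (by have ha := a.2.2; have hb := b.2.2; linarith)⟩⟩

/-- Standard Łukasiewicz residuum: a →_Ł b = min(1, 1-a+b). -/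
def lukImp (a b : UI) : UI :=
  ⟨min 1 (1 - a.1 + b.1), Set.mem_Icc.mpr
    ⟨le_min zero_le_one (by have ha := a.2.2; have hb := b.2.1; linarith), min_le_left _ _⟩⟩

/-- Standard product (Goguen) conjunction: a ⊗_Π b = a·b. -/
def prodMul (a b : UI) : UI := a * b

/-- Standard product (Goguen) residuum: a →_Π b = 1 if a ≤ b, else b/a. -/
def prodImp (a b : UI) : UI :=
  if h : a ≤ b then 1 else
    ⟨b.1 / a.1, Set.mem_Icc.mpr ⟨div_nonneg b.2.1 a.2.1,
      div_le_one_of_le₀ (le_of_lt (Subtype.coe_lt_coe.mpr (not_le.mp h))) a.2.1⟩⟩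

/-- Gödel conjunction: minimum. -/
def godMul (a b : UI) : UI := a ⊓ b

/-- Gödel residuum: a → b = 1 if a ≤ b, else b. -/
def godImp (a b : UI) : UI := if a ≤ b then 1 else b

/-- A structure of truth degrees on [0,1]: a commutative monoid ⟨[0,1],⊗,1⟩
    with ⊗ and → adjoint, and ⊗ distributing over arbitrary suprema
    (the lattice structure is the natural complete linear order of [0,1]). -/
structure RStr where
  mul : UI → UI → UI
  imp : UI → UI → UI
  mul_comm : ∀ a b, mul a b = mul b a
  mul_assoc : ∀ a b c, mul (mul a b) c = mul a (mul b c)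
  mul_one : ∀ a, mul a 1 = a
  adjoint : ∀ a b c, mul a b ≤ c ↔ a ≤ imp b c
  mul_iSup : ∀ (ι : Type) (a : UI) (b : ι → UI), mul a (⨆ i, b i) = ⨆ i, mul a (b i)

/-- A degree in [0,1] is rational. -/
def IsRatUI (x : UI) : Prop := ∃ q : ℚ, (x : ℝ) = q

/-- L is rationally closed: ⊗ and → of rational degrees are rational. -/
def RStr.RationallyClosed (L : RStr) : Prop :=
  ∀ a b, IsRatUI a → IsRatUI b → IsRatUI (L.mul a b) ∧ IsRatUI (L.imp a b)

/-- Condition ⨆_i (a → b_i) = a → ⨆_i b_i for all a and all families {b_i}. -/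
def RStr.ImpSupDistrib (L : RStr) : Prop :=
  ∀ (ι : Type) (a : UI) (b : ι → UI), (⨆ i, L.imp a (b i)) = L.imp a (⨆ i, b i)

variable {V : Type}

/-- A fuzzy set is finite: only finitely many elements get nonzero degree. -/
def FinSet (A : V → UI) : Prop := {p | A p ≠ 0}.Finite

/-- A fuzzy set is rational: all its values are rational. -/
def RatSet (A : V → UI) : Prop := ∀ p, IsRatUI (A p)

/-- Union of fuzzy sets: pointwise supremum. -/
def funion (A B : V → UI) : V → UI := fun p => A p ⊔ B p

/-- c-multiple of a fuzzy set: pointwise ⊗ by c. -/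
def csmul (L : RStr) (c : UI) (A : V → UI) : V → UI := fun p => L.mul c (A p)

/-- Subsethood degree S(A,B) = ⨅_p (A(p) → B(p)). -/
def Subdeg (L : RStr) (A B : V → UI) : UI := ⨅ p, L.imp (A p) (B p)

/-- The deductive system of RFAL: axioms A∪B ⇒ B (A, B finite rational),
    rule (Cut): from A⇒B and B∪C⇒D infer A∪C⇒D, and
    rule (Mul): from A⇒B infer c⊗A ⇒ c⊗B for rational c. -/
inductive Proves (L : RStr) (T : Set ((V → UI) × (V → UI))) : (V → UI) → (V → UI) → Prop
  | ax : ∀ A B, FinSet A → RatSet A → FinSet B → RatSet B →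
      Proves L T (funion A B) B
  | hyp : ∀ A B, (A, B) ∈ T → Proves L T A B
  | cut : ∀ A B C D, Proves L T A B → Proves L T (funion B C) D →
      Proves L T (funion A C) D
  | mul : ∀ A B c, IsRatUI c → Proves L T A B →
      Proves L T (csmul L c A) (csmul L c B)

/-- Provability degree |A⇒B|_Σ = ⨆{c rational : Σ ⊢ A ⇒ c⊗B}. -/
def provDeg (L : RStr) (T : Set ((V → UI) × (V → UI))) (A B : V → UI) : UI :=
  sSup {c : UI | IsRatUI c ∧ Proves L T A (csmul L c B)}

/-- Truth degree ||A⇒B||_e = S(A,e) → S(B,e). -/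
def truthDeg (L : RStr) (e A B : V → UI) : UI :=
  L.imp (Subdeg L A e) (Subdeg L B e)

/-- e is a model of Σ: every formula of Σ is fully true under e. -/
def IsModel (L : RStr) (T : Set ((V → UI) × (V → UI))) (e : V → UI) : Prop :=
  ∀ AB ∈ T, truthDeg L e AB.1 AB.2 = 1

/-- Semantic entailment degree ||A⇒B||_Σ = ⨅{||A⇒B||_e : e model of Σ}. -/
def semDeg (L : RStr) (T : Set ((V → UI) × (V → UI))) (A B : V → UI) : UI :=
  ⨅ e ∈ {e : V → UI | IsModel L T e}, truthDeg L e A B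

/-- A theory: a set of rational fuzzy attribute implications, i.e.
    pairs of finite rational fuzzy sets. -/
def IsTheory (T : Set ((V → UI) × (V → UI))) : Prop :=
  ∀ AB ∈ T, FinSet AB.1 ∧ RatSet AB.1 ∧ FinSet AB.2 ∧ RatSet AB.2

/-- The iteration e⁰_Σ = e, e^{n+1}_Σ = e^n_Σ ∪ ⋃{S(A,e^n_Σ) ⊗ B : A⇒B ∈ Σ}. -/
def iter (L : RStr) (T : Set ((V → UI) × (V → UI))) (e : V → UI) : ℕ → (V → UI)
  | 0 => e
  | n + 1 => fun p => iter L T e n p ⊔ ⨆ AB ∈ T, L.mul (Subdeg L AB.1 (iter L T e n)) (AB.2 p)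

/-- e^ω_Σ = ⋃_{n<ω} e^n_Σ. -/
def omegaIter (L : RStr) (T : Set ((V → UI) × (V → UI))) (e : V → UI) : V → UI :=
  fun p => ⨆ n, iter L T e n p

/-- An L-closure operator: extensive, monotone w.r.t. subsethood degrees,
    and idempotent. -/
def IsClosureOp {U : Type} (L : RStr) (C : (U → UI) → (U → UI)) : Prop :=
  (∀ A u, A u ≤ C A u) ∧ (∀ A B, Subdeg L A B ≤ Subdeg L (C A) (C B)) ∧
  (∀ A, C (C A) = C A)

/-- A finitary operator: C(A) = ⋃{C(B) : B ⊆ A, B finite}. -/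
def FinitaryOp {U : Type} (C : (U → UI) → (U → UI)) : Prop :=
  ∀ A : U → UI, C A = fun u => ⨆ B ∈ {B : U → UI | (∀ v, B v ≤ A v) ∧ FinSet B}, C B u

/-- A rational operator: C(A) = ⋃{C(B) : B ⊑ A}, B finite and rational. -/
def RationalOp {U : Type} (C : (U → UI) → (U → UI)) : Prop :=
  ∀ A : U → UI, C A =
    fun u => ⨆ B ∈ {B : U → UI | (∀ v, B v ≤ A v) ∧ FinSet B ∧ RatSet B}, C B u

/-- Singleton fuzzy set {a/p}. -/
def sing (p : V) (a : UI) : V → UI := fun v => if v = p then a else 0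

/- Auxiliary lemmas for Statement 3 -/
section AuxStmt3

variable {V : Type} (L : RStr) (T : Set ((V → UI) × (V → UI)))

lemma UI_zero_le (a : UI) : (0:UI) ≤ a := a.2.1

lemma RStr.mul_mono_left {a a' : UI} (b : UI) (h : a ≤ a') :
    L.mul a b ≤ L.mul a' b :=
  (L.adjoint a b (L.mul a' b)).mpr (h.trans ((L.adjoint a' b (L.mul a' b)).mp le_rfl))

lemma RStr.mul_mono_right (a : UI) {b b' : UI} (h : b ≤ b') :
    L.mul a b ≤ L.mul a b' := by
  rw [L.mul_comm a b, L.mul_comm a b']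
  exact L.mul_mono_left a h

lemma RStr.mul_zero' (a : UI) : L.mul a 0 = 0 := by
  have h := L.mul_iSup Empty a (fun i => i.elim)
  have h0 : (⨆ i : Empty, (Empty.elim i : UI)) = (0:UI) := by
    rw [iSup_of_empty]; rfl
  have h1 : (⨆ i : Empty, L.mul a (Empty.elim i)) = (0:UI) := by
    rw [iSup_of_empty]; rfl
  rw [h0, h1] at h
  exact h

lemma isRat_zero : IsRatUI (0:UI) := ⟨0, by norm_num⟩

lemma isRat_sup {a b : UI} (ha : IsRatUI a) (hb : IsRatUI b) : IsRatUI (a ⊔ b) := by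
  rcases le_total a b with h | h
  · rwa [sup_eq_right.mpr h]
  · rwa [sup_eq_left.mpr h]

lemma funion_fin {A B : V → UI} (hA : FinSet A) (hB : FinSet B) :
    FinSet (funion A B) := by
  apply (hA.union hB).subset
  intro p hp
  simp only [Set.mem_setOf_eq, Set.mem_union] at hp ⊢
  by_contra hc
  push_neg at hc
  exact hp (show A p ⊔ B p = 0 by rw [hc.1, hc.2]; exact sup_idem _)

lemma funion_rat {A B : V → UI} (hA : RatSet A) (hB : RatSet B) :
    RatSet (funion A B) := fun p => isRat_sup (hA p) (hB p)

lemma csmul_fin {c : UI} {A : V → UI} (hA : FinSet A) : FinSet (csmul L c A) := by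
  apply hA.subset
  intro p hp
  simp only [Set.mem_setOf_eq] at hp ⊢
  intro h0
  exact hp (show L.mul c (A p) = 0 by rw [h0]; exact L.mul_zero' c)

lemma csmul_rat (hrc : L.RationallyClosed) {c : UI} {A : V → UI}
    (hc : IsRatUI c) (hA : RatSet A) : RatSet (csmul L c A) :=
  fun p => (hrc c (A p) hc (hA p)).1

lemma fin_zero : FinSet (fun _ : V => (0:UI)) := by
  have h : {p : V | (fun _ : V => (0:UI)) p ≠ 0} = ∅ := by ext p; simp
  rw [FinSet, h]; exact Set.finite_empty

lemma proves_weaken {A D D' : V → UI} (h : Proves L T A D)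
    (hDf : FinSet D) (hDr : RatSet D) (hD'f : FinSet D') (hD'r : RatSet D')
    (hle : ∀ p, D' p ≤ D p) : Proves L T A D' := by
  have hax : Proves L T (funion D D') D' := Proves.ax D D' hDf hDr hD'f hD'r
  have heq : funion D (fun _ => (0:UI)) = funion D D' := by
    funext p
    show D p ⊔ 0 = D p ⊔ D' p
    rw [sup_eq_left.mpr (UI_zero_le (D p)), sup_eq_left.mpr (hle p)]
  have h2 : Proves L T (funion D (fun _ => (0:UI))) D' := by rw [heq]; exact hax
  have h3 := Proves.cut A D (fun _ => (0:UI)) D' h h2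
  have heq2 : funion A (fun _ => (0:UI)) = A :=
    funext fun p => sup_eq_left.mpr (UI_zero_le (A p))
  rwa [heq2] at h3

lemma proves_add {A B C : V → UI} (h1 : Proves L T A B) (h2 : Proves L T A C)
    (hBf : FinSet B) (hBr : RatSet B) (hCf : FinSet C) (hCr : RatSet C) :
    Proves L T A (funion B C) := by
  have hax := Proves.ax (L := L) (T := T) (funion B C) (funion B C)
    (funion_fin hBf hCf) (funion_rat hBr hCr)
    (funion_fin hBf hCf) (funion_rat hBr hCr)
  have heq : funion (funion B C) (funion B C) = funion B C :=
    funext fun p => sup_idem _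
  rw [heq] at hax
  have s1 := Proves.cut A B C (funion B C) h1 hax
  have hcomm : funion C A = funion A C := funext fun p => sup_comm _ _
  have s2 : Proves L T (funion C A) (funion B C) := by rw [hcomm]; exact s1
  have s3 := Proves.cut A C A (funion B C) h2 s2
  have hAA : funion A A = A := funext fun p => sup_idem _
  rwa [hAA] at s3

lemma proves_zero {A : V → UI} (hAf : FinSet A) (hAr : RatSet A) :
    Proves L T A (fun _ => (0:UI)) := by
  have h := Proves.ax (L := L) (T := T) A (fun _ => (0:UI)) hAf hAr fin_zero
    (fun _ => isRat_zero)
  have heq : funion A (fun _ => (0:UI)) = A :=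
    funext fun p => sup_eq_left.mpr (UI_zero_le (A p))
  rwa [heq] at h

lemma finsup_fin {ι : Type} (D : ι → V → UI) (hf : ∀ i, FinSet (D i))
    (s : Finset ι) : FinSet (fun p => s.sup fun i => D i p) := by
  classical
  induction s using Finset.induction_on with
  | empty =>
    simp only [Finset.sup_empty]
    exact fin_zero
  | @insert a s ha ih =>
    simp only [Finset.sup_insert]
    exact funion_fin (hf a) ih

lemma finsup_rat {ι : Type} (D : ι → V → UI) (hr : ∀ i, RatSet (D i))
    (s : Finset ι) : RatSet (fun p => s.sup fun i => D i p) := by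
  classical
  induction s using Finset.induction_on with
  | empty =>
    simp only [Finset.sup_empty]
    exact fun _ => isRat_zero
  | @insert a s ha ih =>
    simp only [Finset.sup_insert]
    exact funion_rat (hr a) ih

lemma proves_finsup {ι : Type} {A : V → UI} (hAf : FinSet A) (hAr : RatSet A)
    (D : ι → V → UI) (hf : ∀ i, FinSet (D i)) (hr : ∀ i, RatSet (D i))
    (h : ∀ i, Proves L T A (D i)) (s : Finset ι) :
    Proves L T A (fun p => s.sup fun i => D i p) := by
  classical
  induction s using Finset.induction_on with
  | empty =>
    simp only [Finset.sup_empty]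
    exact proves_zero L T hAf hAr
  | @insert a s ha ih =>
    simp only [Finset.sup_insert]
    exact proves_add L T (h a) ih (hf a) (hr a) (finsup_fin D hf s) (finsup_rat D hr s)

lemma rat_iSup {ι : Type} [Fintype ι] (f : ι → UI) (h : ∀ i, IsRatUI (f i)) :
    IsRatUI (⨆ i, f i) := by
  rcases isEmpty_or_nonempty ι with hE | hN
  · rw [iSup_of_empty]; exact isRat_zero
  · obtain ⟨i, hi⟩ := Finite.exists_max f
    rw [le_antisymm (iSup_le hi) (le_iSup f i)]
    exact h i

lemma fin_iSup {ι : Type} [Fintype ι] (Bf : ι → V → UI) (h : ∀ i, FinSet (Bf i)) :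
    FinSet (fun p => ⨆ i, Bf i p) := by
  apply (Set.finite_iUnion (fun i => h i)).subset
  intro p hp
  simp only [Set.mem_setOf_eq] at hp
  by_contra hc
  simp only [Set.mem_iUnion, Set.mem_setOf_eq, not_exists, not_not] at hc
  exact hp (iSup_eq_bot.mpr fun i => hc i)

end AuxStmt3

/-- ⨅_{i∈I} |A⇒B_i|_Σ = |A ⇒ ⋃_{i∈I} B_i|_Σ for finite I. -/
theorem inf_provDeg_union {V : Type} [Countable V] (L : RStr)
    (hrc : L.RationallyClosed) (hd : L.ImpSupDistrib)
    (T : Set ((V → UI) × (V → UI))) (hT : IsTheory T)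
    (ι : Type) [Fintype ι] (Bf : ι → V → UI)
    (hBf : ∀ i, FinSet (Bf i)) (hBr : ∀ i, RatSet (Bf i))
    (A : V → UI) (hAf : FinSet A) (hAr : RatSet A) :
    (⨅ i, provDeg L T A (Bf i)) = provDeg L T A (fun p => ⨆ i, Bf i p) := by
  classical
  set U : V → UI := fun p => ⨆ i, Bf i p with hU
  have hUf : FinSet U := fin_iSup Bf hBf
  have hUr : RatSet U := fun p => rat_iSup _ (fun i => hBr i p)
  apply le_antisymm
  · -- hard direction
    apply le_of_forall_lt
    intro x hx
    have hx' : (x:ℝ) < ((⨅ i, provDeg L T A (Bf i) : UI) : ℝ) := by exact_mod_cast hx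
    obtain ⟨q, hq1, hq2⟩ := exists_rat_btwn hx'
    have hq0 : (0:ℝ) ≤ (q:ℝ) := le_of_lt (lt_of_le_of_lt x.2.1 hq1)
    have hq1' : (q:ℝ) ≤ 1 := le_of_lt (lt_of_lt_of_le hq2 (⨅ i, provDeg L T A (Bf i)).2.2)
    set c : UI := ⟨(q:ℝ), ⟨hq0, hq1'⟩⟩ with hcdef
    have hc : IsRatUI c := ⟨q, rfl⟩
    have hcinf : c < ⨅ i, provDeg L T A (Bf i) := by
      rw [← Subtype.coe_lt_coe]
      exact hq2
    have hkey : ∀ i, Proves L T A (csmul L c (Bf i)) := by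
      intro i
      have h2 : ¬ provDeg L T A (Bf i) ≤ c :=
        not_le.mpr (lt_of_lt_of_le hcinf (iInf_le _ i))
      rw [provDeg, sSup_le_iff] at h2
      push_neg at h2
      obtain ⟨d, ⟨hdr, hdp⟩, hcd⟩ := h2
      refine proves_weaken L T hdp (csmul_fin L (hBf i)) (csmul_rat L hrc hdr (hBr i))
        (csmul_fin L (hBf i)) (csmul_rat L hrc hc (hBr i)) ?_
      intro p
      exact L.mul_mono_left (Bf i p) (le_of_lt hcd)
    have hsup := proves_finsup L T hAf hAr (fun i => csmul L c (Bf i))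
      (fun i => csmul_fin L (hBf i)) (fun i => csmul_rat L hrc hc (hBr i))
      hkey Finset.univ
    have heq : (fun p => Finset.univ.sup fun i => csmul L c (Bf i) p) = csmul L c U := by
      funext p
      rw [Finset.sup_univ_eq_iSup]
      exact (L.mul_iSup ι c (fun i => Bf i p)).symm
    rw [heq] at hsup
    have hmem : c ∈ {e : UI | IsRatUI e ∧ Proves L T A (csmul L e U)} := ⟨hc, hsup⟩
    have hxc : x < c := by
      rw [← Subtype.coe_lt_coe]
      exact hq1
    exact lt_of_lt_of_le hxc (le_sSup hmem)
  · apply le_iInf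
    intro i
    apply sSup_le_sSup
    rintro e ⟨he, hpf⟩
    refine ⟨he, ?_⟩
    refine proves_weaken L T hpf (csmul_fin L hUf) (csmul_rat L hrc he hUr)
      (csmul_fin L (hBf i)) (csmul_rat L hrc he (hBr i)) ?_
    intro p
    exact L.mul_mono_right e (le_iSup (fun j => Bf j p) i)
end
end

section
/- Finite stabilization of the least-model iteration: let (⊗,→) be either the standard Łukasiewicz operations or the standard product (Goguen) operations on [0,1]. Then for any finite theory Σ and any rational evaluation e (an evaluation all of whose values are rational), there exists n < ω such that e^ω_Σ = e^n_Σ. -/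
/- Common framework for Rational Fuzzy Attribute Logic (RFAL):
   truth degrees in the real unit interval, fuzzy sets, subsethood,
   the deductive system (axioms, Cut, Mul), provability and semantic
   entailment degrees, and the least-model iteration. -/

open scoped Classical
noncomputable section

variable {V : Type}

/-- Sums of at most `n` elements of `G`. -/
def SumsLe (G : Set ℝ) : ℕ → Set ℝ
  | 0 => {0}
  | n+1 => SumsLe G n ∪ Set.image2 (· + ·) G (SumsLe G n)

lemma sumsLe_finite {G : Set ℝ} (hG : G.Finite) : ∀ n, (SumsLe G n).Finite
  | 0 => Set.finite_singleton 0
  | n+1 => (sumsLe_finite hG n).union (hG.image2 _ (sumsLe_finite hG n))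

lemma sumsLe_succ {G : Set ℝ} (n : ℕ) : SumsLe G n ⊆ SumsLe G (n+1) :=
  Set.subset_union_left

lemma sumsLe_mono {G : Set ℝ} {a b : ℕ} (h : a ≤ b) : SumsLe G a ⊆ SumsLe G b := by
  induction b with
  | zero => simpa [Nat.le_zero.mp h] using subset_rfl
  | succ b ih =>
    rcases Nat.lt_or_ge a (b+1) with h' | h'
    · exact (ih (Nat.lt_succ_iff.mp h')).trans (sumsLe_succ b)
    · have : a = b + 1 := le_antisymm h h'
      simp [this]

lemma walk_sums {G : Set ℝ} {n : ℕ} {u : ℕ → ℝ}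
    (hu : ∀ i, i < n → u (i+1) - u i ∈ G) :
    ∀ j i, i + j ≤ n → u (i+j) - u i ∈ SumsLe G j := by
  intro j
  induction j with
  | zero => intro i _; simp [SumsLe]
  | succ j ih =>
    intro i hij
    have h1 : u (i+j+1) - u (i+j) ∈ G := hu (i+j) (by omega)
    have h2 : u (i+j) - u i ∈ SumsLe G j := ih i (by omega)
    have : u (i+(j+1)) - u i = (u (i+j+1) - u (i+j)) + (u (i+j) - u i) := by
      have : i + (j+1) = i + j + 1 := by omega
      rw [this]; ring
    rw [this]
    exact Or.inr (Set.mem_image2_of_mem h1 h2)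

/-- The walk-length bound lemma: walks with gains in a finite set `G`,
per-vertex strictly increasing values, values in `[m,M]`, vertices in a set of
size `≤ k`, have uniformly bounded length. -/
theorem walk_bound {α : Type*} (G : Set ℝ) (hG : G.Finite) (m M : ℝ) :
    ∀ k : ℕ, ∃ L : ℕ, ∀ (S : Set α), S.Finite → S.ncard ≤ k →
      ∀ (n : ℕ) (v : ℕ → α) (u : ℕ → ℝ),
        (∀ i, i ≤ n → v i ∈ S) → (∀ i, i < n → u (i+1) - u i ∈ G) →
        (∀ i j, i < j → j ≤ n → v i = v j → u i < u j) →
        (∀ i, i ≤ n → u i ∈ Set.Icc m M) → n ≤ L := by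
  intro k
  induction k with
  | zero =>
    refine ⟨0, fun S hSfin hScard n v u hv _ _ _ => ?_⟩
    have : S = ∅ := by
      have := Set.ncard_eq_zero hSfin |>.mp (Nat.le_zero.mp hScard)
      exact this
    exact absurd (hv 0 (Nat.zero_le n)) (by simp [this])
  | succ k IH =>
    obtain ⟨L', hL'⟩ := IH
    set PP : Set ℝ := {x ∈ SumsLe G (L'+2) | 0 < x} with hPP
    have hPPfin : PP.Finite := (sumsLe_finite hG (L'+2)).subset (Set.sep_subset _ _)
    set δ : ℝ := if h : PP.Nonempty then sInf PP else 1 with hδ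
    have hδpos : 0 < δ := by
      rw [hδ]
      split
      · next h => exact (h.csInf_mem hPPfin).2
      · exact one_pos
    have hδle : ∀ x ∈ PP, δ ≤ x := by
      intro x hx
      rw [hδ, dif_pos ⟨x, hx⟩]
      exact csInf_le hPPfin.bddBelow hx
    set T : ℕ := ⌈(M - m)/δ⌉₊ + 1 with hT
    refine ⟨T*(L'+2) + (L'+1), ?_⟩
    intro S hSfin hScard
    have key : ∀ t : ℕ, ∀ (n : ℕ) (v : ℕ → α) (u : ℕ → ℝ),
        (∀ i, i ≤ n → v i ∈ S) → (∀ i, i < n → u (i+1) - u i ∈ G) →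
        (∀ i j, i < j → j ≤ n → v i = v j → u i < u j) →
        (∀ i, i ≤ n → u i ∈ Set.Icc m M) →
        M - u 0 < t * δ → n ≤ t*(L'+2) + (L'+1) := by
      intro t
      induction t with
      | zero =>
        intro n v u hv hg hp hw h0
        have := (hw 0 (Nat.zero_le n)).2
        simp at h0
        linarith
      | succ t ihT =>
        intro n v u hv hg hp hw h0
        have hv0 : v 0 ∈ S := hv 0 (Nat.zero_le n)
        have hcard' : (S \ {v 0}).ncard ≤ k := by
          have := Set.ncard_diff_singleton_lt_of_mem hv0 hSfin
          omega
        by_cases hex : ∃ j, 0 < j ∧ j ≤ n ∧ v j = v 0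
        · set a := Nat.find hex with ha
          obtain ⟨ha0, han, hava⟩ := Nat.find_spec hex
          have hmin : ∀ j, j < a → ¬(0 < j ∧ j ≤ n ∧ v j = v 0) := fun j hj => Nat.find_min hex hj
          -- interior of first-return avoids v 0; bound a
          have haL : a ≤ L' + 2 := by
            by_contra hcon
            push_neg at hcon
            have h2a : 2 ≤ a := by omega
            have : a - 2 ≤ L' := by
              refine hL' (S \ {v 0}) hSfin.diff hcard' (a-2)
                (fun i => v (i+1)) (fun i => u (i+1)) ?_ ?_ ?_ ?_
              · intro i hi
                have h1 : i + 1 ≤ n := by omega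
                refine ⟨hv _ h1, ?_⟩
                simp only [Set.mem_singleton_iff]
                have := hmin (i+1) (by omega)
                push_neg at this
                exact this (by omega) h1
              · intro i hi; exact hg (i+1) (by omega)
              · intro i j hij hj hvv
                exact hp (i+1) (j+1) (by omega) (by omega) hvv
              · intro i hi; exact hw (i+1) (by omega)
            omega
          -- gain over the first return is at least δ
          have hgain : δ ≤ u a - u 0 := by
            have hmem : u a - u 0 ∈ SumsLe G a := by
              have := walk_sums hg a 0 (by omega)
              simpa using this
            have hmem' : u a - u 0 ∈ SumsLe G (L'+2) := sumsLe_mono haL hmem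
            have hpos : 0 < u a - u 0 := by
              have := hp 0 a ha0 han hava.symm
              linarith
            exact hδle _ ⟨hmem', hpos⟩
          -- apply inner IH to the shifted walk
          have hrest : n - a ≤ t*(L'+2) + (L'+1) := by
            refine ihT (n - a) (fun i => v (i+a)) (fun i => u (i+a)) ?_ ?_ ?_ ?_ ?_
            · intro i hi; exact hv _ (by omega)
            · intro i hi
              have := hg (i+a) (by omega)
              simpa [Nat.add_right_comm] using this
            · intro i j hij hj hvv
              exact hp (i+a) (j+a) (by omega) (by omega) hvv
            · intro i hi; exact hw _ (by omega)
            · show M - u (0 + a) < ↑t * δ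
              push_cast at h0
              simp only [Nat.zero_add]
              linarith
          have hnat : (t+1)*(L'+2) = t*(L'+2) + (L'+2) := by ring
          omega
        · -- no return to v 0: whole tail is a walk avoiding v 0
          push_neg at hex
          rcases Nat.eq_zero_or_pos n with h | h
          · omega
          · have : n - 1 ≤ L' := by
              refine hL' (S \ {v 0}) hSfin.diff hcard' (n-1)
                (fun i => v (i+1)) (fun i => u (i+1)) ?_ ?_ ?_ ?_
              · intro i hi
                refine ⟨hv _ (by omega), ?_⟩
                simp only [Set.mem_singleton_iff]
                exact hex (i+1) (by omega) (by omega)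
              · intro i hi; exact hg (i+1) (by omega)
              · intro i j hij hj hvv
                exact hp (i+1) (j+1) (by omega) (by omega) hvv
              · intro i hi; exact hw (i+1) (by omega)
            have hnat : (t+1)*(L'+2) = t*(L'+2) + (L'+2) := by ring
            omega
    intro n v u hv hg hp hw
    refine key T n v u hv hg hp hw ?_
    have hu0 : m ≤ u 0 := (hw 0 (Nat.zero_le n)).1
    have h1 : (M - m)/δ ≤ (⌈(M - m)/δ⌉₊ : ℝ) := Nat.le_ceil _
    have h2 : M - m ≤ (⌈(M - m)/δ⌉₊ : ℝ) * δ := by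
      rw [div_le_iff₀ hδpos] at h1
      linarith
    have : (T : ℝ) * δ = (⌈(M - m)/δ⌉₊ : ℝ) * δ + δ := by
      rw [hT]; push_cast; ring
    rw [this]
    linarith


lemma UI.bot_eq_zero : (⊥ : UI) = 0 := by ext; rfl

lemma RStr.mul_zero'_s8 (L : RStr) (s : UI) : L.mul s 0 = 0 := by
  have h := L.mul_iSup Empty s (fun i => i.elim)
  rw [iSup_of_empty, iSup_of_empty, UI.bot_eq_zero] at h
  exact h

lemma RStr.one_mul' (L : RStr) (b : UI) : L.mul 1 b = b := by
  rw [L.mul_comm]; exact L.mul_one b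

-- finite-range inf attained
lemma iInf_attained {ι : Type*} [Nonempty ι] (f : ι → UI) (h : (Set.range f).Finite) :
    ∃ i, (⨅ j, f j) = f i := by
  have hne : (Set.range f).Nonempty := Set.range_nonempty f
  have := hne.csInf_mem h
  rw [sInf_range] at this
  obtain ⟨i, hi⟩ := this
  exact ⟨i, hi.symm⟩

lemma monotone_stab (g : ℕ → UI) (hg : Monotone g) (N0 : ℕ) (VS : Set UI)
    (hVS : VS.Finite) (hmem : ∀ n, g (N0 + n) ∈ VS) :
    ∃ N, ∀ k, N ≤ k → g k = g N := by
  set h : ℕ → UI := fun n => g (N0 + n) with hh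
  have hrange : (Set.range h).Finite := hVS.subset (by rintro x ⟨n, rfl⟩; exact hmem n)
  have hne : (Set.range h).Nonempty := Set.range_nonempty h
  have := hne.csSup_mem hrange
  rw [sSup_range] at this
  obtain ⟨n0, hn0⟩ := this
  refine ⟨N0 + n0, fun k hk => ?_⟩
  have h1 : g k ≤ g (N0 + n0) := by
    have h2 : g k = h (k - N0) := by rw [hh]; congr 1; omega
    have h3 : g (N0 + n0) = h n0 := rfl
    rw [h2, h3, hn0]
    exact le_iSup h _
  exact le_antisymm h1 (hg hk)

lemma finset_values {V : Type*} (A : V → UI) (h : {p | A p ≠ 0}.Finite) :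
    (Set.range A).Finite := by
  have : Set.range A ⊆ insert 0 (A '' {p | A p ≠ 0}) := by
    rintro x ⟨p, rfl⟩
    by_cases hp : A p = 0
    · simp [hp]
    · exact Set.mem_insert_of_mem _ ⟨p, hp, rfl⟩
  exact ((h.image A).insert 0).subset this

section Master
variable {V : Type}

lemma iter_succ (L : RStr) (T : Set ((V → UI) × (V → UI))) (e : V → UI) (n : ℕ) (p : V) :
    iter L T e (n+1) p = iter L T e n p ⊔
      ⨆ AB ∈ T, L.mul (Subdeg L AB.1 (iter L T e n)) (AB.2 p) := rfl

lemma iter_mono (L : RStr) (T : Set ((V → UI) × (V → UI))) (e : V → UI) (p : V) :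
    Monotone (fun n => iter L T e n p) :=
  monotone_nat_of_le_succ (fun n => by rw [iter_succ]; exact le_sup_left)

lemma chain_mono {f : ℕ → ℕ} {ℓ : ℕ} (h : ∀ i, i < ℓ → f i < f (i+1)) :
    ∀ j, j ≤ ℓ → ∀ i, i ≤ j → f i ≤ f j := by
  intro j
  induction j with
  | zero => exact fun _ i hi => by rw [Nat.le_zero.mp hi]
  | succ j ih =>
    intro hj i hi
    rcases Nat.lt_or_ge i (j+1) with h' | h'
    · exact le_trans (ih (by omega) i (by omega)) (h j (by omega)).le
    · have : i = j+1 := by omega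
      rw [this]

lemma chain_strict {f : ℕ → ℕ} {ℓ : ℕ} (h : ∀ i, i < ℓ → f i < f (i+1)) :
    ∀ i j, i < j → j ≤ ℓ → f i < f j := by
  intro i j hij hj
  have h1 : f i ≤ f (j-1) := chain_mono h (j-1) (by omega) i (by omega)
  have h2 : f (j-1) < f j := by
    have := h (j-1) (by omega)
    rwa [show j-1+1 = j from by omega] at this
  omega

lemma subdeg_cases [Nonempty V] (L : RStr) (A f : V → UI)
    (hA : FinSet A) (himp0 : ∀ y, L.imp 0 y = 1) :
    Subdeg L A f = 1 ∨ ∃ q, A q ≠ 0 ∧ Subdeg L A f = L.imp (A q) (f q) := by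
  set g : V → UI := fun q => L.imp (A q) (f q) with hg
  have hrange : (Set.range g).Finite := by
    have hsub : Set.range g ⊆ insert 1 (g '' {q | A q ≠ 0}) := by
      rintro x ⟨q, rfl⟩
      by_cases hq : A q = 0
      · left; rw [hg]; simp only; rw [hq, himp0]
      · exact Set.mem_insert_of_mem _ ⟨q, hq, rfl⟩
    exact ((hA.image g).insert 1).subset hsub
  obtain ⟨q0, hq0⟩ := iInf_attained g hrange
  have hsd : Subdeg L A f = g q0 := hq0
  by_cases h : A q0 = 0
  · left; rw [hsd, hg]; simp only; rw [h, himp0]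
  · exact Or.inr ⟨q0, h, hsd⟩

lemma step_cases (L : RStr) (T : Set ((V → UI) × (V → UI))) (hfin : T.Finite)
    (e : V → UI) (n : ℕ) (p : V) :
    iter L T e (n+1) p = iter L T e n p ∨
    ∃ AB ∈ T, iter L T e (n+1) p = L.mul (Subdeg L AB.1 (iter L T e n)) (AB.2 p) ∧
      iter L T e n p < iter L T e (n+1) p := by
  set f : ((V → UI) × (V → UI)) → UI := fun AB => L.mul (Subdeg L AB.1 (iter L T e n)) (AB.2 p) with hf
  set s : UI := ⨆ AB ∈ T, f AB with hs
  have hsucc : iter L T e (n+1) p = iter L T e n p ⊔ s := rfl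
  rcases le_or_gt s (iter L T e n p) with h | h
  · left; rw [hsucc]; exact sup_eq_left.mpr h
  · right
    have hval : iter L T e (n+1) p = s := by rw [hsucc]; exact sup_eq_right.mpr h.le
    have himg : s = sSup (f '' T) := by rw [hs, sSup_image]
    have hne : (f '' T).Nonempty := by
      by_contra hc
      rw [Set.not_nonempty_iff_eq_empty] at hc
      rw [himg, hc, sSup_empty] at h
      exact absurd h (not_lt.mpr bot_le)
    have hmem : s ∈ f '' T := by rw [himg]; exact hne.csSup_mem (hfin.image f)
    obtain ⟨AB, hAB, hfAB⟩ := hmem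
    exact ⟨AB, hAB, by rw [hval, ← hfAB], hval ▸ h⟩

/-- Backward chain of strict-increase events realized by the trajectory. -/
def Chain (L : RStr) (T : Set ((V → UI) × (V → UI))) (e : V → UI) (F : UI → ℝ)
    (G : Set ℝ) (B0 : Set UI) (P : Set V) (N0 n : ℕ) (p : V) : Prop :=
  ∃ (ℓ : ℕ) (t : ℕ → ℕ) (v : ℕ → V) (u : ℕ → ℝ),
    (∀ i, i < ℓ → t i < t (i+1)) ∧
    N0 ≤ t 0 ∧ t ℓ ≤ n ∧ v ℓ = p ∧
    (∀ i, i ≤ ℓ → v i ∈ P) ∧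
    (∀ i, i ≤ ℓ → 0 < iter L T e (t i) (v i)) ∧
    (∀ i, i ≤ ℓ → u i = F (iter L T e (t i) (v i))) ∧
    (∀ i, i < ℓ → u (i+1) - u i ∈ G) ∧
    (∀ i, 1 ≤ i → i ≤ ℓ → iter L T e (t i - 1) (v i) < iter L T e (t i) (v i)) ∧
    iter L T e (t 0) (v 0) ∈ B0 ∧
    iter L T e (t ℓ) (v ℓ) = iter L T e n p

end Master

section MasterMain
variable {V : Type}

lemma master [Nonempty V] (L : RStr) (T : Set ((V → UI) × (V → UI)))
    (hT : IsTheory T) (hfin : T.Finite) (e : V → UI)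
    (F : UI → ℝ)
    (hFmono : ∀ x y : UI, 0 < x → x < y → F x < F y)
    (himp0 : ∀ y, L.imp 0 y = 1)
    (hkey : ∀ a b x : UI, 0 < L.mul (L.imp a x) b →
      L.mul (L.imp a x) b = b ∨ L.mul (L.imp a x) b = L.mul (L.imp a 0) b ∨
      (0 < x ∧ 0 < a ∧ 0 < b ∧ F (L.mul (L.imp a x) b) = F x + (F b - F a))) :
    ∃ n : ℕ, omegaIter L T e = iter L T e n := by
  have hmono : ∀ p, Monotone (fun n => iter L T e n p) := fun p => iter_mono L T e p
  have hzero_le : ∀ y : UI, (0:UI) ≤ y := fun y => by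
    rw [← UI.bot_eq_zero]; exact bot_le
  have hle_one : ∀ y : UI, y ≤ (1:UI) := fun y => y.2.2
  have hFle : ∀ a b : UI, 0 < a → a ≤ b → F a ≤ F b := by
    intro a b ha hab
    rcases eq_or_lt_of_le hab with rfl | h
    · exact le_refl _
    · exact (hFmono a b ha h).le
  have hFinj : ∀ a b : UI, 0 < a → 0 < b → F a = F b → a = b := by
    intro a b ha hb hab
    rcases lt_trichotomy a b with h | h | h
    · exact absurd hab (ne_of_lt (hFmono a b ha h))
    · exact h
    · exact absurd hab.symm (ne_of_lt (hFmono b a hb h))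
  -- the finite attribute set
  set P : Set V := {p | ∃ AB ∈ T, AB.1 p ≠ 0 ∨ AB.2 p ≠ 0} with hP
  have hPfin : P.Finite := by
    have hsub : P ⊆ ⋃ AB ∈ T, ({p | AB.1 p ≠ 0} ∪ {p | AB.2 p ≠ 0}) := by
      rintro p ⟨AB, hAB, hp⟩
      exact Set.mem_biUnion hAB (by rcases hp with h | h; exacts [Or.inl h, Or.inr h])
    exact (Set.Finite.biUnion hfin
      (fun AB hAB => ((hT AB hAB).1.union (hT AB hAB).2.2.1))).subset hsub
  -- off-P constancy
  have hoff : ∀ p, p ∉ P → ∀ n, iter L T e n p = e p := by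
    intro p hp n
    induction n with
    | zero => rfl
    | succ n ih =>
      have hsup : (⨆ AB ∈ T, L.mul (Subdeg L AB.1 (iter L T e n)) (AB.2 p)) = (0:UI) := by
        rw [← UI.bot_eq_zero]
        refine le_antisymm ?_ bot_le
        refine iSup_le fun AB => iSup_le fun hAB => ?_
        have hz : AB.2 p = 0 := by
          by_contra hc
          exact hp ⟨AB, hAB, Or.inr hc⟩
        rw [hz, L.mul_zero'_s8, UI.bot_eq_zero]
      rw [iter_succ, hsup, ← UI.bot_eq_zero, sup_bot_eq, ih]
  -- positivity threshold time
  set posTime : V → ℕ := fun q => if h : ∃ n, 0 < iter L T e n q then Nat.find h else 0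
    with hposTime
  set N0 : ℕ := hPfin.toFinset.sup posTime with hN0
  have hN0pos : ∀ q ∈ P, ∀ mm, 0 < iter L T e mm q → 0 < iter L T e N0 q := by
    intro q hq mm hm
    have hex : ∃ n, 0 < iter L T e n q := ⟨mm, hm⟩
    have h1 : 0 < iter L T e (Nat.find hex) q := Nat.find_spec hex
    have h2 : posTime q = Nat.find hex := by rw [hposTime]; exact dif_pos hex
    have h3 : posTime q ≤ N0 := Finset.le_sup (hPfin.mem_toFinset.mpr hq)
    exact lt_of_lt_of_le h1 (hmono q (by omega))
  -- base values and gains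
  set B0 : Set UI := ((fun q => iter L T e N0 q) '' P) ∪
      ((⋃ AB ∈ T, Set.range AB.2) ∪
       (⋃ AB ∈ T, Set.image2 (fun a b => L.mul (L.imp a 0) b)
          (Set.range AB.1) (Set.range AB.2))) with hB0
  have hB0fin : B0.Finite := by
    refine (hPfin.image _).union (Set.Finite.union ?_ ?_)
    · exact Set.Finite.biUnion hfin (fun AB hAB => finset_values AB.2 (hT AB hAB).2.2.1)
    · exact Set.Finite.biUnion hfin (fun AB hAB =>
        (finset_values AB.1 (hT AB hAB).1).image2 _ (finset_values AB.2 (hT AB hAB).2.2.1))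
  set G : Set ℝ := ⋃ AB ∈ T, Set.image2 (fun b a => F b - F a)
      (Set.range AB.2) (Set.range AB.1) with hG
  have hGfin : G.Finite := Set.Finite.biUnion hfin (fun AB hAB =>
    (finset_values AB.2 (hT AB hAB).2.2.1).image2 _ (finset_values AB.1 (hT AB hAB).1))
  -- window
  set M : ℝ := F 1 with hM
  set W : Set ℝ := insert (F 1) ((fun q => F (iter L T e N0 q)) '' P) with hW
  have hWfin : W.Finite := (hPfin.image _).insert _
  have hmle : ∀ r ∈ W, sInf W ≤ r := fun r hr => csInf_le hWfin.bddBelow hr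
  set m : ℝ := sInf W with hm
  obtain ⟨LB, hLB⟩ := walk_bound (α := V) G hGfin m M P.ncard
  set FS : Set ℝ := Set.image2 (fun r s => r + s) (F '' B0) (SumsLe G LB) with hFS
  have hFSfin : FS.Finite := (hB0fin.image F).image2 _ (sumsLe_finite hGfin LB)
  set VS : Set UI := insert 0 {y : UI | 0 < y ∧ F y ∈ FS} with hVS
  have hVSfin : VS.Finite := by
    refine (Set.Finite.of_finite_image (f := F) ?_ ?_).insert 0
    · exact hFSfin.subset (by rintro r ⟨y, ⟨hy, hyF⟩, rfl⟩; exact hyF)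
    · intro a ha b hb hab
      exact hFinj a b ha.1 hb.1 hab
  -- main claim: chains
  have claim : ∀ n, ∀ p ∈ P, iter L T e (N0 + n) p = 0 ∨
      Chain L T e F G B0 P N0 (N0+n) p := by
    intro n
    induction n with
    | zero =>
      intro p hp
      by_cases h0 : iter L T e N0 p = 0
      · exact Or.inl h0
      · right
        refine ⟨0, fun _ => N0, fun _ => p, fun _ => F (iter L T e N0 p),
          ?_, le_rfl, Nat.le_add_right N0 0, rfl, fun i _ => hp,
          fun i _ => lt_of_le_of_ne (hzero_le _) (Ne.symm h0),
          fun i _ => rfl, ?_, ?_, Or.inl ⟨p, hp, rfl⟩, rfl⟩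
        · intro i hi; exact absurd hi (by omega)
        · intro i hi; exact absurd hi (by omega)
        · intro i h1 h2; exact absurd (le_trans h1 h2) (by omega)
    | succ n ih =>
      intro p hp
      rcases step_cases L T hfin e (N0+n) p with hsame | ⟨AB, hAB, heq, hlt⟩
      · rcases ih p hp with h0 |
          ⟨ℓ, t, v, u, ht, htN0, htn, hvl, hvP, hpos, hu, hgain, hev, hbase, hpers⟩
        · left
          show iter L T e ((N0+n)+1) p = 0
          rw [hsame, h0]
        · right
          exact ⟨ℓ, t, v, u, ht, htN0, by omega, hvl, hvP, hpos, hu, hgain, hev, hbase,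
            by show iter L T e (t ℓ) (v ℓ) = iter L T e ((N0+n)+1) p; rw [hpers, hsame]⟩
      · right
        have hvpos : 0 < iter L T e ((N0+n)+1) p := lt_of_le_of_lt (hzero_le _) hlt
        rcases subdeg_cases L AB.1 (iter L T e (N0+n)) (hT AB hAB).1 himp0 with
          hs1 | ⟨q, hq0, hsq⟩
        · -- Subdeg = 1 : value is the constant AB.2 p
          have hval1 : iter L T e ((N0+n)+1) p = AB.2 p := by rw [heq, hs1, L.one_mul']
          refine ⟨0, fun _ => (N0+n)+1, fun _ => p, fun _ => F (iter L T e ((N0+n)+1) p),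
            ?_, by beta_reduce; omega, by beta_reduce; omega, rfl, fun i _ => hp,
            fun i _ => hvpos, fun i _ => rfl,
            ?_, ?_, ?_, rfl⟩
          · intro i hi; exact absurd hi (by omega)
          · intro i hi; exact absurd hi (by omega)
          · intro i h1 h2; exact absurd (le_trans h1 h2) (by omega)
          · show iter L T e ((N0+n)+1) p ∈ B0
            rw [hval1]
            exact Or.inr (Or.inl (Set.mem_biUnion hAB ⟨p, rfl⟩))
        · rw [hsq] at heq
          have hqP : q ∈ P := ⟨AB, hAB, Or.inl hq0⟩
          have hvpos' : 0 < L.mul (L.imp (AB.1 q) (iter L T e (N0+n) q)) (AB.2 p) := by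
            rw [← heq]; exact hvpos
          rcases hkey (AB.1 q) (AB.2 p) (iter L T e (N0+n) q) hvpos' with
            hb | hc | ⟨hxq, ha, hbpos, hFeq⟩
          · -- value is the constant AB.2 p
            have hval1 : iter L T e ((N0+n)+1) p = AB.2 p := by rw [heq, hb]
            refine ⟨0, fun _ => (N0+n)+1, fun _ => p, fun _ => F (iter L T e ((N0+n)+1) p),
              ?_, by beta_reduce; omega, by beta_reduce; omega, rfl, fun i _ => hp,
              fun i _ => hvpos, fun i _ => rfl,
              ?_, ?_, ?_, rfl⟩
            · intro i hi; exact absurd hi (by omega)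
            · intro i hi; exact absurd hi (by omega)
            · intro i h1 h2; exact absurd (le_trans h1 h2) (by omega)
            · show iter L T e ((N0+n)+1) p ∈ B0
              rw [hval1]
              exact Or.inr (Or.inl (Set.mem_biUnion hAB ⟨p, rfl⟩))
          · -- value is the constant (a→0)⊗b
            have hval1 : iter L T e ((N0+n)+1) p = L.mul (L.imp (AB.1 q) 0) (AB.2 p) := by
              rw [heq, hc]
            refine ⟨0, fun _ => (N0+n)+1, fun _ => p, fun _ => F (iter L T e ((N0+n)+1) p),
              ?_, by beta_reduce; omega, by beta_reduce; omega, rfl, fun i _ => hp,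
              fun i _ => hvpos, fun i _ => rfl,
              ?_, ?_, ?_, rfl⟩
            · intro i hi; exact absurd hi (by omega)
            · intro i hi; exact absurd hi (by omega)
            · intro i h1 h2; exact absurd (le_trans h1 h2) (by omega)
            · show iter L T e ((N0+n)+1) p ∈ B0
              rw [hval1]
              exact Or.inr (Or.inr (Set.mem_biUnion hAB
                (Set.mem_image2_of_mem ⟨q, rfl⟩ ⟨p, rfl⟩)))
          · -- proper step: extend the chain from q
            rcases ih q hqP with h0' |
              ⟨ℓ, t, v, u, ht, htN0, htn, hvl, hvP, hpos, hu, hgain, hev, hbase, hpers⟩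
            · rw [h0'] at hxq; exact absurd hxq (lt_irrefl 0)
            · refine ⟨ℓ+1, fun i => if i = ℓ+1 then (N0+n)+1 else t i,
                fun i => if i = ℓ+1 then p else v i,
                fun i => if i = ℓ+1 then F (iter L T e ((N0+n)+1) p) else u i,
                ?_, ?_, ?_, ?_, ?_, ?_, ?_, ?_, ?_, ?_, ?_⟩
              · intro i hi
                beta_reduce
                by_cases h' : i+1 = ℓ+1
                · have hiℓ : i = ℓ := by omega
                  rw [if_neg (by omega), if_pos h', hiℓ]
                  omega
                · rw [if_neg (by omega), if_neg h']
                  exact ht i (by omega)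
              · beta_reduce
                rw [if_neg (by omega)]; exact htN0
              · beta_reduce
                rw [if_pos rfl]; omega
              · beta_reduce
                rw [if_pos rfl]
              · intro i hi
                beta_reduce
                by_cases h' : i = ℓ+1
                · rw [if_pos h']; exact hp
                · rw [if_neg h']; exact hvP i (by omega)
              · intro i hi
                beta_reduce
                by_cases h' : i = ℓ+1
                · rw [if_pos h', if_pos h']; exact hvpos
                · rw [if_neg h', if_neg h']; exact hpos i (by omega)
              · intro i hi
                beta_reduce
                by_cases h' : i = ℓ+1
                · rw [if_pos h', if_pos h', if_pos h']
                · rw [if_neg h', if_neg h', if_neg h']; exact hu i (by omega)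
              · intro i hi
                beta_reduce
                by_cases h' : i + 1 = ℓ+1
                · have hiℓ : i = ℓ := by omega
                  rw [if_pos h', if_neg (by omega), hiℓ]
                  have huℓ : u ℓ = F (iter L T e (N0+n) q) := by
                    rw [hu ℓ le_rfl, hpers]
                  have hFv : F (iter L T e ((N0+n)+1) p) =
                      F (iter L T e (N0+n) q) + (F (AB.2 p) - F (AB.1 q)) := by
                    rw [heq]; exact hFeq
                  rw [huℓ, hFv]
                  have : F (iter L T e (N0+n) q) + (F (AB.2 p) - F (AB.1 q)) -
                      F (iter L T e (N0+n) q) = F (AB.2 p) - F (AB.1 q) := by ring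
                  rw [this]
                  exact Set.mem_biUnion hAB (Set.mem_image2_of_mem ⟨p, rfl⟩ ⟨q, rfl⟩)
                · rw [if_neg h', if_neg (by omega)]
                  exact hgain i (by omega)
              · intro i h1 h2
                beta_reduce
                by_cases h' : i = ℓ+1
                · rw [if_pos h', if_pos h']
                  have h'' : (N0+n)+1-1 = N0+n := by omega
                  rw [h'']
                  exact hlt
                · rw [if_neg h', if_neg h']
                  exact hev i h1 (by omega)
              · beta_reduce
                rw [if_neg (by omega), if_neg (by omega)]
                exact hbase
              · beta_reduce
                rw [if_pos rfl, if_pos rfl]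
                rfl
  -- values lie in VS
  have hval : ∀ n, ∀ p ∈ P, iter L T e (N0 + n) p ∈ VS := by
    intro n p hp
    rcases claim n p hp with h0 |
      ⟨ℓ, t, v, u, ht, htN0, htn, hvl, hvP, hpos, hu, hgain, hev, hbase, hpers⟩
    · rw [h0]; exact Set.mem_insert 0 _
    · have htmono := chain_mono ht
      have htstrict := chain_strict ht
      have hl : ℓ ≤ LB := by
        refine hLB P hPfin le_rfl ℓ v u hvP hgain ?_ ?_
        · intro i j hij hj hvv
          have h1 : 0 < iter L T e (t i) (v i) := hpos i (by omega)
          have h2 : iter L T e (t i) (v i) ≤ iter L T e (t j - 1) (v j) := by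
            rw [hvv]; exact hmono (v j) (by have := htstrict i j hij hj; omega)
          have h3 := hev j (by omega) hj
          rw [hu i (by omega), hu j hj]
          exact hFmono _ _ h1 (lt_of_le_of_lt h2 h3)
        · intro i hi
          have hqP := hvP i hi
          have hpi := hpos i hi
          have hN0le : N0 ≤ t i := le_trans htN0 (htmono i hi 0 (Nat.zero_le i))
          have hposN0 : 0 < iter L T e N0 (v i) := hN0pos (v i) hqP (t i) hpi
          constructor
          · rw [hu i hi]
            exact le_trans (hmle _ (Set.mem_insert_of_mem _ ⟨v i, hqP, rfl⟩))
              (hFle _ _ hposN0 (hmono _ hN0le))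
          · rw [hu i hi]
            rcases eq_or_lt_of_le (hle_one (iter L T e (t i) (v i))) with heq1 | hlt1
            · rw [heq1]
            · exact (hFmono _ _ hpi hlt1).le
      have hsum : u ℓ - u 0 ∈ SumsLe G LB := by
        have h := walk_sums hgain ℓ 0 (by omega)
        simp only [Nat.zero_add] at h
        exact sumsLe_mono hl h
      have hFx : F (iter L T e (N0+n) p) = F (iter L T e (t 0) (v 0)) + (u ℓ - u 0) := by
        have e1 : u ℓ = F (iter L T e (N0+n) p) := by rw [hu ℓ le_rfl, hpers]
        have e0 : u 0 = F (iter L T e (t 0) (v 0)) := hu 0 (Nat.zero_le ℓ)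
        rw [← e1, ← e0]; ring
      have hpos' : 0 < iter L T e (N0+n) p := by rw [← hpers]; exact hpos ℓ le_rfl
      have hmemFS : F (iter L T e (N0+n) p) ∈ FS := by
        rw [hFS, hFx]
        exact Set.mem_image2_of_mem ⟨_, hbase, rfl⟩ hsum
      exact Set.mem_insert_of_mem _ ⟨hpos', hmemFS⟩
  -- pointwise stabilization
  have hstab : ∀ p, ∃ N, ∀ k, N ≤ k → iter L T e k p = iter L T e N p := by
    intro p
    by_cases hp : p ∈ P
    · exact monotone_stab _ (hmono p) N0 VS hVSfin (fun n => hval n p hp)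
    · exact ⟨0, fun k _ => by rw [hoff p hp, hoff p hp]⟩
  -- uniform stabilization
  set Nfin : V → ℕ := fun p =>
    if h : ∃ N, ∀ k, N ≤ k → iter L T e k p = iter L T e N p then Nat.find h else 0
    with hNfin
  set NN : ℕ := hPfin.toFinset.sup Nfin with hNN
  have hNNs : ∀ p, ∀ k, NN ≤ k → iter L T e k p = iter L T e NN p := by
    intro p k hk
    by_cases hp : p ∈ P
    · have hex := hstab p
      have h1 := Nat.find_spec hex
      have h2 : Nfin p = Nat.find hex := by rw [hNfin]; exact dif_pos hex
      have h3 : Nfin p ≤ NN := Finset.le_sup (hPfin.mem_toFinset.mpr hp)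
      rw [h1 k (by omega), h1 NN (by omega)]
    · rw [hoff p hp, hoff p hp]
  refine ⟨NN, ?_⟩
  funext p
  show (⨆ n, iter L T e n p) = iter L T e NN p
  refine le_antisymm ?_ (le_iSup (fun n => iter L T e n p) NN)
  refine iSup_le fun n => ?_
  rcases le_total n NN with h | h
  · exact hmono p h
  · exact le_of_eq (hNNs p n h)

end MasterMain

section Cases

lemma UI.coe_zero : (((0:UI)):ℝ) = 0 := rfl
lemma UI.coe_one : (((1:UI)):ℝ) = 1 := rfl

lemma UI.pos_iff (y : UI) : 0 < y ↔ (0:ℝ) < (y:ℝ) := by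
  rw [← Subtype.coe_lt_coe, UI.coe_zero]

lemma UI.lt_iff (x y : UI) : x < y ↔ (x:ℝ) < (y:ℝ) := by
  rw [← Subtype.coe_lt_coe]

lemma luk_imp0 (y : UI) : lukImp 0 y = 1 := by
  apply Subtype.ext
  show min 1 (1 - ((0:UI):ℝ) + (y:ℝ)) = ((1:UI):ℝ)
  rw [UI.coe_zero, UI.coe_one]
  have hy := y.2.1
  rw [min_eq_left (by linarith)]

lemma luk_key (a b x : UI) (h : 0 < lukMul (lukImp a x) b) :
    lukMul (lukImp a x) b = b ∨ lukMul (lukImp a x) b = lukMul (lukImp a 0) b ∨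
    (0 < x ∧ 0 < a ∧ 0 < b ∧
      ((lukMul (lukImp a x) b : UI) : ℝ) = (x:ℝ) + ((b:ℝ) - (a:ℝ))) := by
  have hcoe : ((lukMul (lukImp a x) b : UI) : ℝ)
      = max 0 (min 1 (1 - (a:ℝ) + (x:ℝ)) + (b:ℝ) - 1) := rfl
  have ha0 := a.2.1; have ha1 := a.2.2
  have hb0 := b.2.1; have hb1 := b.2.2
  have hx0 := x.2.1; have hx1 := x.2.2
  by_cases hax : (a:ℝ) ≤ (x:ℝ)
  · left
    apply Subtype.ext
    rw [hcoe, min_eq_left (by linarith), max_eq_right (by linarith)]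
    ring
  · push_neg at hax
    by_cases hx : (x:ℝ) = 0
    · right; left
      have : x = 0 := Subtype.ext (by rw [hx, UI.coe_zero])
      rw [this]
    · right; right
      have hpos : (0:ℝ) < ((lukMul (lukImp a x) b : UI) : ℝ) := (UI.pos_iff _).mp h
      rw [hcoe, min_eq_right (by linarith)] at hpos
      have hmax : (0:ℝ) < 1 - (a:ℝ) + (x:ℝ) + (b:ℝ) - 1 := by
        by_contra hc
        push_neg at hc
        rw [max_eq_left hc] at hpos
        exact lt_irrefl 0 hpos
      refine ⟨(UI.pos_iff x).mpr (by cases lt_or_eq_of_le hx0 with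
          | inl h' => exact h' | inr h' => exact absurd h'.symm hx),
        (UI.pos_iff a).mpr (by linarith),
        (UI.pos_iff b).mpr (by nlinarith), ?_⟩
      rw [hcoe, min_eq_right (by linarith), max_eq_right (by nlinarith)]
      ring
  
lemma prod_imp0 (y : UI) : prodImp 0 y = 1 := dif_pos (by
  rw [← Subtype.coe_le_coe, UI.coe_zero]; exact y.2.1)

lemma prod_key (a b x : UI) (h : 0 < prodMul (prodImp a x) b) :
    prodMul (prodImp a x) b = b ∨ prodMul (prodImp a x) b = prodMul (prodImp a 0) b ∨
    (0 < x ∧ 0 < a ∧ 0 < b ∧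
      Real.log ((prodMul (prodImp a x) b : UI) : ℝ)
        = Real.log (x:ℝ) + (Real.log (b:ℝ) - Real.log (a:ℝ))) := by
  have ha0 := a.2.1; have hb0 := b.2.1; have hx0 := x.2.1
  by_cases hax : a ≤ x
  · left
    apply Subtype.ext
    show ((prodImp a x : UI) : ℝ) * (b:ℝ) = (b:ℝ)
    rw [prodImp, dif_pos hax, UI.coe_one, one_mul]
  · right; right
    have hxa : (x:ℝ) < (a:ℝ) := by
      rw [← Subtype.coe_lt_coe] at *
      exact not_le.mp hax
    have hcoe : ((prodMul (prodImp a x) b : UI) : ℝ) = ((x:ℝ)/(a:ℝ)) * (b:ℝ) := by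
      show ((prodImp a x : UI) : ℝ) * (b:ℝ) = _
      rw [prodImp, dif_neg hax]
    have hpos : (0:ℝ) < ((prodMul (prodImp a x) b : UI) : ℝ) := (UI.pos_iff _).mp h
    rw [hcoe] at hpos
    have hapos : (0:ℝ) < (a:ℝ) := lt_of_le_of_lt hx0 hxa
    have hxpos : (0:ℝ) < (x:ℝ) := by
      rcases lt_trichotomy (0:ℝ) (x:ℝ) with h' | h' | h'
      · exact h'
      · exfalso; rw [← h'] at hpos; simp at hpos
      · linarith
    have hbpos : (0:ℝ) < (b:ℝ) := by nlinarith [div_pos hxpos hapos]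
    refine ⟨(UI.pos_iff x).mpr hxpos, (UI.pos_iff a).mpr hapos, (UI.pos_iff b).mpr hbpos, ?_⟩
    rw [hcoe, Real.log_mul (by positivity) (by positivity), Real.log_div (by positivity) (by positivity)]
    ring

end Cases

theorem finite_stabilization' {V : Type} [Countable V] (L : RStr)
    (h : (L.mul = lukMul ∧ L.imp = lukImp) ∨ (L.mul = prodMul ∧ L.imp = prodImp))
    (T : Set ((V → UI) × (V → UI))) (hT : IsTheory T) (hfin : T.Finite)
    (e : V → UI) (he : RatSet e) :
    ∃ n : ℕ, omegaIter L T e = iter L T e n := by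
  rcases isEmpty_or_nonempty V with hV | hV
  · exact ⟨0, funext fun p => (IsEmpty.false p).elim⟩
  · rcases h with ⟨hmul, himp⟩ | ⟨hmul, himp⟩
    · refine master L T hT hfin e (fun z => (z:ℝ)) ?_ ?_ ?_
      · intro x y _ hxy
        exact (UI.lt_iff x y).mp hxy
      · intro y; rw [himp]; exact luk_imp0 y
      · intro a b x h0
        rw [hmul, himp] at h0 ⊢
        exact luk_key a b x h0
    · refine master L T hT hfin e (fun z => Real.log (z:ℝ)) ?_ ?_ ?_
      · intro x y hx hxy
        exact Real.log_lt_log ((UI.pos_iff x).mp hx) ((UI.lt_iff x y).mp hxy)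
      · intro y; rw [himp]; exact prod_imp0 y
      · intro a b x h0
        rw [hmul, himp] at h0 ⊢
        exact prod_key a b x h0

/-- finite stabilization of the least-model iteration for
    Łukasiewicz or product operations, finite Σ and rational evaluation e:
    there is n with e^ω_Σ = e^n_Σ. -/
theorem finite_stabilization {V : Type} [Countable V] (L : RStr)
    (h : (L.mul = lukMul ∧ L.imp = lukImp) ∨ (L.mul = prodMul ∧ L.imp = prodImp))
    (T : Set ((V → UI) × (V → UI))) (hT : IsTheory T) (hfin : T.Finite)
    (e : V → UI) (he : RatSet e) :
    ∃ n : ℕ, omegaIter L T e = iter L T e n :=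
  finite_stabilization' L h T hT hfin e he
end
end
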